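/- arXiv:1702.02629 — 7 statements merged into one kernel-verified Lean document; each statement's English description precedes it below -/
import Mathlib

section
/- Let θ be a root of X³ + X + 1 in a field extension of ℚ, and set x₀ = θ² + 1, y₀ = 3357θ² − 2133θ + 4851, z₀ = 2826θ² − 2025θ + 4158, t₀ = −42θ² + 24θ − 54. Then (x₀² + 1)·y₀² = 3(t₀⁴ − 54t₀² − 117t₀ − 243). -/
theorem statement_1 {K : Type*} [Field K] [Algebra ℚ K] (θ : K)
    (hθ : θ ^ 3 + θ + 1 = 0)
    (x₀ y₀ t₀ : K)
    (hx₀ : x₀ = θ ^ 2 + 1)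
    (hy₀ : y₀ = 3357 * θ ^ 2 - 2133 * θ + 4851)
    (ht₀ : t₀ = -42 * θ ^ 2 + 24 * θ - 54) :
    (x₀ ^ 2 + 1) * y₀ ^ 2 = 3 * (t₀ ^ 4 - 54 * t₀ ^ 2 - 117 * t₀ - 243) := by
  subst hx₀ hy₀ ht₀
  linear_combination (1934361 * θ ^ 5 + 7016382 * θ ^ 4 - 8574336 * θ ^ 3 + 30981447 * θ ^ 2 - 18459981 * θ + 22009401) * hθ
end

section
/- Let θ be a root of X³ + X + 1, and set x₀ = θ² + 1, z₀ = 2826θ² − 2025θ + 4158, t₀ = −42θ² + 24θ − 54. Then (x₀² + 2)·z₀² = 3(t₀⁴ − 54t₀² − 117t₀ − 243). -/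
theorem statement_2 {K : Type*} [Field K] [Algebra ℚ K] (θ : K)
    (hθ : θ ^ 3 + θ + 1 = 0)
    (x₀ z₀ t₀ : K)
    (hx₀ : x₀ = θ ^ 2 + 1)
    (hz₀ : z₀ = 2826 * θ ^ 2 - 2025 * θ + 4158)
    (ht₀ : t₀ = -42 * θ ^ 2 + 24 * θ - 54) :
    (x₀ ^ 2 + 2) * z₀ ^ 2 = 3 * (t₀ ^ 4 - 54 * t₀ ^ 2 - 117 * t₀ - 243) := by
  subst hx₀ hz₀ ht₀
  linear_combination (26811891 - 32393439 * θ + 40994748 * θ ^ 2 - 21375171 * θ ^ 3 + 9892044 * θ ^ 4 - 1348812 * θ ^ 5) * hθ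
end

section
/- Let θ be a root of X³ + X + 1 and x₀ = θ² + 1, y₀ = 3357θ² − 2133θ + 4851, z₀ = 2826θ² − 2025θ + 4158, t₀ = −42θ² + 24θ − 54. Then the point (x₀, y₀, z₀, t₀) satisfies both equations (x² + 1)y² = 3(t⁴ − 54t² − 117t − 243) and (x² + 2)z² = 3(t⁴ − 54t² − 117t − 243), i.e., it is an L-rational point on Skorobogatov's surface 𝒮. -/
theorem statement_3 {L : Type*} [Field L] [Algebra ℚ L] (θ : L)
    (hθ : θ ^ 3 + θ + 1 = 0)
    (x₀ y₀ z₀ t₀ : L)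
    (hx₀ : x₀ = θ ^ 2 + 1)
    (hy₀ : y₀ = 3357 * θ ^ 2 - 2133 * θ + 4851)
    (hz₀ : z₀ = 2826 * θ ^ 2 - 2025 * θ + 4158)
    (ht₀ : t₀ = -42 * θ ^ 2 + 24 * θ - 54) :
    (x₀ ^ 2 + 1) * y₀ ^ 2 = 3 * (t₀ ^ 4 - 54 * t₀ ^ 2 - 117 * t₀ - 243) ∧
    (x₀ ^ 2 + 2) * z₀ ^ 2 = 3 * (t₀ ^ 4 - 54 * t₀ ^ 2 - 117 * t₀ - 243) := by
  subst hx₀ hy₀ hz₀ ht₀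
  constructor
  · linear_combination (22009401 - 18459981 * θ + 30981447 * θ ^ 2 - 8574336 * θ ^ 3 +
      7016382 * θ ^ 4 + 1934361 * θ ^ 5) * hθ
  · linear_combination (26811891 - 32393439 * θ + 40994748 * θ ^ 2 - 21375171 * θ ^ 3 +
      9892044 * θ ^ 4 - 1348812 * θ ^ 5) * hθ
end

section
/- Let θ satisfy θ³ + θ + 1 = 0 and let a = 6θ² − 4θ + 9 ∈ L = ℚ(θ). Then a ≠ 0, and with t₀ = −42θ² + 24θ − 54 there exists u ∈ L such that a·u² = 3(t₀⁴ − 54t₀² − 117t₀ − 243); i.e., the twist 𝒞^a : aU² = 3(T⁴ − 54T² − 117T − 243) has an L-rational point with T-coordinate t₀. -/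
theorem statement_6 {L : Type*} [Field L] [Algebra ℚ L] (θ : L)
    (hθ : θ ^ 3 + θ + 1 = 0)
    (hgen : IntermediateField.adjoin ℚ {θ} = ⊤)
    (a t₀ : L)
    (ha : a = 6 * θ ^ 2 - 4 * θ + 9)
    (ht₀ : t₀ = -42 * θ ^ 2 + 24 * θ - 54) :
    a ≠ 0 ∧ ∃ u : L, a * u ^ 2 = 3 * (t₀ ^ 4 - 54 * t₀ ^ 2 - 117 * t₀ - 243) := by
  constructor
  · intro h0
    have h1 : a * (1 - 2 * θ ^ 2) = 1 := by
      rw [ha]; linear_combination (8 - 12 * θ) * hθ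
    rw [h0, zero_mul] at h1
    exact zero_ne_one h1
  · refine ⟨1494 * θ ^ 2 - 1224 * θ + 2133, ?_⟩
    rw [ha, ht₀]
    linear_combination (-9335088 * θ ^ 5 + 21337344 * θ ^ 4 - 43570872 * θ ^ 3 +
      46394208 * θ ^ 2 - 36147060 * θ + 15892200) * hθ
end

section
/- Let θ satisfy θ³ + θ + 1 = 0 and let a = 6θ² − 4θ + 9, x₀ = θ² + 1 in L = ℚ(θ). Then there exist y, z ∈ L such that a·y² = x₀² + 1 and a·z² = x₀² + 2; i.e., the twisted curve 𝒟^a given by aY² = X² + 1, aZ² = X² + 2 has an L-rational point with X-coordinate x₀. -/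
theorem statement_7 {L : Type*} [Field L] [Algebra ℚ L] (θ : L)
    (hθ : θ ^ 3 + θ + 1 = 0)
    (hgen : IntermediateField.adjoin ℚ {θ} = ⊤)
    (a x₀ : L)
    (ha : a = 6 * θ ^ 2 - 4 * θ + 9)
    (hx₀ : x₀ = θ ^ 2 + 1) :
    ∃ y z : L, a * y ^ 2 = x₀ ^ 2 + 1 ∧ a * z ^ 2 = x₀ ^ 2 + 2 := by
  subst ha hx₀
  refine ⟨θ ^ 2, θ ^ 2 - 1, ?_, ?_⟩
  · linear_combination (6 * θ ^ 3 - 4 * θ ^ 2 + 2 * θ - 2) * hθ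
  · linear_combination (6 * θ ^ 3 - 4 * θ ^ 2 - 10 * θ + 6) * hθ
end

section
/- There exist no x, y, z, t ∈ ℚ satisfying (x² + 1)y² = (x² + 2)z² = 3(t⁴ − 54t² − 117t − 243) with y ≠ 0 or z ≠ 0 — in fact, Skorobogatov's surface given by these equations has no rational points at all in this affine chart. -/
/-!
The quartic `t ^ 4 - 54 t ^ 2 - 117 t - 243` has no rational root: its homogenisation is odd at
every coprime pair. Hence `y z ≠ 0`, and multiplying the two equations shows that
`(x ^ 2 + 1) (x ^ 2 + 2)` is a square in `ℚ`. Writing `x = p / q` in lowest terms, the coprime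
factors `p ^ 2 + q ^ 2 = α ^ 2` and `p ^ 2 + 2 q ^ 2 = β ^ 2` are squares, so
`α ^ 4 - q ^ 4 = (α ^ 2 - q ^ 2) (α ^ 2 + q ^ 2) = (p β) ^ 2`, which Fermat's descent for
`a ^ 4 - b ^ 4 = c ^ 2` rules out (`x = 0` is excluded because `2` is not a square).
-/

theorem Int.exists_sq_of_isCoprime_of_mul_eq_sq {a b c : ℤ} (h : IsCoprime a b)
    (heq : a * b = c ^ 2) (ha : 0 ≤ a) : ∃ a₀, a = a₀ ^ 2 := by
  obtain ⟨a₀, h | h⟩ := Int.sq_of_isCoprime h heq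
  · exact ⟨a₀, h⟩
  · exact ⟨0, by nlinarith [sq_nonneg a₀]⟩

theorem Int.exists_eq_two_mul_sq_and_eq_sq {m n l : ℤ} (hmn : IsCoprime m n) (hm : 0 < m)
    (hn : n % 2 = 1) (h : m * n = 2 * l ^ 2) :
    ∃ u v, m = 2 * u ^ 2 ∧ n = v ^ 2 ∧ u ≠ 0 ∧ v % 2 = 1 ∧ IsCoprime v u := by
  obtain ⟨e, rfl⟩ : 2 ∣ m := by
    rcases Int.emod_two_eq_zero_or_one m with hm2 | hm2
    · exact Int.dvd_of_emod_eq_zero hm2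
    · have := congrArg (· % 2) h
      simp [Int.mul_emod, hm2, hn] at this
  have hen : e * n = l ^ 2 := by linarith
  have hen' : IsCoprime e n := hmn.of_mul_left_right
  have hn0 : 0 ≤ n := by nlinarith [sq_nonneg l]
  obtain ⟨u, rfl⟩ := Int.exists_sq_of_isCoprime_of_mul_eq_sq hen' hen (by omega)
  obtain ⟨v, rfl⟩ := Int.exists_sq_of_isCoprime_of_mul_eq_sq hen'.symm
    (c := l) (by linear_combination hen) hn0
  refine ⟨u, v, rfl, rfl, ?_, ?_, ?_⟩
  · rintro rfl; simp at hm
  · exact Int.odd_iff.mp ((Int.odd_pow.mp (Int.odd_iff.mpr hn)).resolve_right two_ne_zero)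
  · exact (IsCoprime.pow_iff two_pos two_pos).mp hen'.symm

/-- Fermat's right triangle theorem says that `a ^ 4 - b ^ 4 = c ^ 2` has no such solution. -/
def FermatRightTriangle (a b c : ℤ) : Prop :=
  b ≠ 0 ∧ c ≠ 0 ∧ a ^ 4 = b ^ 4 + c ^ 2

namespace FermatRightTriangle

variable {a b c : ℤ}

theorem ne_zero (h : FermatRightTriangle a b c) : a ≠ 0 := by
  obtain ⟨hb, -, h⟩ := h
  rintro rfl
  linarith [pow_pos (sq_pos_of_ne_zero hb) 2, sq_nonneg c]

theorem exists_smaller_of_not_isCoprime (h : FermatRightTriangle a b c) (hab : ¬ IsCoprime a b) :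
    ∃ a' b' c', FermatRightTriangle a' b' c' ∧ a'.natAbs < a.natAbs := by
  have ha := h.ne_zero
  obtain ⟨hb, hc, h⟩ := h
  have hd2 : (2 : ℤ) ≤ Int.gcd a b := by
    have : Int.gcd a b ≠ 0 := fun h0 ↦ ha (Int.gcd_eq_zero_iff.mp h0).1
    have : Int.gcd a b ≠ 1 := mt Int.isCoprime_iff_gcd_eq_one.mpr hab
    omega
  obtain ⟨d, hd2, ⟨a₁, rfl⟩, ⟨b₁, rfl⟩⟩ : ∃ d : ℤ, 2 ≤ d ∧ d ∣ a ∧ d ∣ b :=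
    ⟨_, hd2, Int.gcd_dvd_left a b, Int.gcd_dvd_right a b⟩
  have hd0 : d ≠ 0 := by omega
  obtain ⟨c₁, rfl⟩ : d ^ 2 ∣ c := by
    rw [← Int.pow_dvd_pow_iff two_ne_zero]
    exact ⟨a₁ ^ 4 - b₁ ^ 4, by linear_combination -h⟩
  refine ⟨a₁, b₁, c₁, ⟨right_ne_zero_of_mul hb, right_ne_zero_of_mul hc, ?_⟩, ?_⟩
  · exact mul_left_cancel₀ (pow_ne_zero 4 hd0) (by linear_combination h)
  · rw [Int.natAbs_mul]
    have : 0 < a₁.natAbs := Int.natAbs_pos.mpr (right_ne_zero_of_mul ha)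
    have : 2 ≤ d.natAbs := by omega
    nlinarith

theorem isCoprime_right (h : FermatRightTriangle a b c) (hab : IsCoprime a b) : IsCoprime c b := by
  have hc : c ^ 2 = a ^ 4 + b ^ 4 * (-1) := by linear_combination -h.2.2
  rw [← IsCoprime.pow_iff two_pos four_pos, hc, IsCoprime.add_mul_left_left_iff]
  exact hab.pow

theorem exists_smaller_of_odd (h : FermatRightTriangle a b c) (hab : IsCoprime a b)
    (hb : b % 2 = 1) : ∃ a' b' c', FermatRightTriangle a' b' c' ∧ a'.natAbs < a.natAbs := by
  have ha := h.ne_zero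
  have hcb := h.isCoprime_right hab
  obtain ⟨hb0, hc0, h⟩ := h
  have htriple : PythagoreanTriple (b ^ 2) c (a ^ 2) := by
    unfold PythagoreanTriple; linear_combination -h
  have hcop : Int.gcd (b ^ 2) c = 1 :=
    Int.isCoprime_iff_gcd_eq_one.mp hcb.symm.pow_left
  have hb2 : b ^ 2 % 2 = 1 := Int.odd_iff.mp (Int.odd_iff.mpr hb).pow
  obtain ⟨m, n, hbmn, hcmn, hamn, -⟩ :=
    htriple.coprime_classification' hcop hb2 (by positivity)
  have hn : n ≠ 0 := by rintro rfl; simp [hc0] at hcmn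
  refine ⟨m, n, a * b, ⟨hn, mul_ne_zero ha hb0, ?_⟩, ?_⟩
  · linear_combination (-(a ^ 2)) * hbmn - (m ^ 2 - n ^ 2) * hamn
  · rw [Int.natAbs_lt_iff_sq_lt]
    have hn2 : 0 < n ^ 2 := by positivity
    nlinarith

theorem exists_smaller_of_sq_eq_fourth_pow_add_four_mul_fourth_pow {u v : ℤ} (ha : 0 < a)
    (hu : u ≠ 0) (hv : v % 2 = 1) (huv : IsCoprime v u) (h : a ^ 2 = v ^ 4 + 4 * u ^ 4) :
    ∃ a' b' c', FermatRightTriangle a' b' c' ∧ a'.natAbs < a.natAbs := by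
  have htriple : PythagoreanTriple (v ^ 2) (2 * u ^ 2) a := by
    unfold PythagoreanTriple; linear_combination -h
  have hv2 : IsCoprime v 2 := by
    obtain ⟨k, hk⟩ := Int.odd_iff.mpr hv
    exact ⟨1, -k, by linear_combination hk⟩
  have hcop : Int.gcd (v ^ 2) (2 * u ^ 2) = 1 :=
    Int.isCoprime_iff_gcd_eq_one.mp (hv2.mul_right huv.pow_right).pow_left
  obtain ⟨r, s, hvrs, hurs, hars, hrs_gcd, -, hr_nonneg⟩ :=
    htriple.coprime_classification' hcop (Int.odd_iff.mp (Int.odd_iff.mpr hv).pow) ha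
  have hu2 : r * s = u ^ 2 := by linarith
  have hu2pos : 0 < u ^ 2 := by positivity
  have hr : 0 < r := lt_of_le_of_ne hr_nonneg (by rintro rfl; linarith)
  have hs : 0 < s := pos_of_mul_pos_right (hu2 ▸ hu2pos) hr.le
  have hrs := Int.isCoprime_iff_gcd_eq_one.mpr hrs_gcd
  obtain ⟨g, rfl⟩ := Int.exists_sq_of_isCoprime_of_mul_eq_sq hrs hu2 hr.le
  obtain ⟨k, rfl⟩ := Int.exists_sq_of_isCoprime_of_mul_eq_sq hrs.symm
    (c := u) (by linear_combination hu2) hs.le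
  refine ⟨g, k, v, ⟨?_, ?_, ?_⟩, ?_⟩
  · rintro rfl; simp at hs
  · rintro rfl; simp at hv
  · linear_combination -hvrs
  · rw [Int.natAbs_lt_iff_sq_lt]
    nlinarith

theorem exists_smaller_of_even (h : FermatRightTriangle a b c) (hab : IsCoprime a b)
    (hb : b % 2 = 0) : ∃ a' b' c', FermatRightTriangle a' b' c' ∧ a'.natAbs < a.natAbs := by
  have ha := h.ne_zero
  have hcb := h.isCoprime_right hab
  obtain ⟨hb0, hc0, h⟩ := h
  obtain ⟨l, rfl⟩ := Int.dvd_of_emod_eq_zero hb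
  have hc : c % 2 = 1 := by
    rcases Int.emod_two_eq_zero_or_one c with hc | hc
    · have := hcb.isUnit_of_dvd' (Int.dvd_of_emod_eq_zero hc) (dvd_mul_right 2 l)
      simp [Int.isUnit_iff] at this
    · exact hc
  have htriple : PythagoreanTriple c ((2 * l) ^ 2) (a ^ 2) := by
    unfold PythagoreanTriple; linear_combination -h
  obtain ⟨m, n, hcmn, hlmn, hamn, hmn_gcd, hpar, hm_nonneg⟩ :=
    htriple.coprime_classification' (Int.isCoprime_iff_gcd_eq_one.mp hcb.pow_right) hc
      (by positivity)
  have hmn2 : m * n = 2 * l ^ 2 := by linarith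
  have hl : 0 < l ^ 2 := by have := right_ne_zero_of_mul hb0; positivity
  have hm : 0 < m := lt_of_le_of_ne hm_nonneg (by rintro rfl; linarith)
  have hn : 0 < n := pos_of_mul_pos_right (by linarith) hm.le
  have hmn := Int.isCoprime_iff_gcd_eq_one.mpr hmn_gcd
  rw [← Int.natAbs_abs a]
  rcases hpar with ⟨-, hn2⟩ | ⟨hm2, -⟩
  · obtain ⟨u, v, rfl, rfl, hu, hv, huv⟩ := Int.exists_eq_two_mul_sq_and_eq_sq hmn hm hn2 hmn2
    exact exists_smaller_of_sq_eq_fourth_pow_add_four_mul_fourth_pow (abs_pos.mpr ha) hu hv huv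
      (by rw [sq_abs]; linear_combination hamn)
  · obtain ⟨u, v, rfl, rfl, hu, hv, huv⟩ :=
      Int.exists_eq_two_mul_sq_and_eq_sq hmn.symm hn hm2 (l := l) (by linear_combination hmn2)
    exact exists_smaller_of_sq_eq_fourth_pow_add_four_mul_fourth_pow (abs_pos.mpr ha) hu hv huv
      (by rw [sq_abs]; linear_combination hamn)

theorem exists_smaller (h : FermatRightTriangle a b c) :
    ∃ a' b' c', FermatRightTriangle a' b' c' ∧ a'.natAbs < a.natAbs := by
  by_cases hab : IsCoprime a b
  · rcases Int.emod_two_eq_zero_or_one b with hb | hb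
    · exact h.exists_smaller_of_even hab hb
    · exact h.exists_smaller_of_odd hab hb
  · exact h.exists_smaller_of_not_isCoprime hab

end FermatRightTriangle

theorem not_fermatRightTriangle (a b c : ℤ) : ¬ FermatRightTriangle a b c := by
  induction hN : a.natAbs using Nat.strong_induction_on generalizing a b c with
  | _ N ih =>
    intro h
    obtain ⟨a', b', c', h', hlt⟩ := h.exists_smaller
    exact ih _ (hN ▸ hlt) a' b' c' rfl h'

theorem Int.not_isSquare_sq_add_sq_mul_sq_add_two_mul_sq {p q : ℤ} (hpq : IsCoprime p q)
    (hp : p ≠ 0) (hq : q ≠ 0) : ¬ IsSquare ((p ^ 2 + q ^ 2) * (p ^ 2 + 2 * q ^ 2)) := by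
  rintro ⟨w, hw⟩
  have hcop : IsCoprime (p ^ 2 + q ^ 2) (p ^ 2 + 2 * q ^ 2) := by
    obtain ⟨a, b, hab⟩ := hpq.pow (m := 2) (n := 2)
    exact ⟨2 * a - b, b - a, by linear_combination hab⟩
  obtain ⟨α, hα⟩ := Int.exists_sq_of_isCoprime_of_mul_eq_sq hcop (c := w)
    (by linear_combination hw) (by positivity)
  obtain ⟨β, hβ⟩ := Int.exists_sq_of_isCoprime_of_mul_eq_sq hcop.symm (c := w)
    (by linear_combination hw) (by positivity)
  have hβ0 : β ≠ 0 := by rintro rfl; nlinarith [sq_pos_of_ne_zero hq, sq_nonneg p]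
  exact not_fermatRightTriangle α q (p * β)
    ⟨hq, mul_ne_zero hp hβ0, by linear_combination -(α ^ 2 + p ^ 2 + q ^ 2) * hα + p ^ 2 * hβ⟩

theorem Rat.not_isSquare_sq_add_one_mul_sq_add_two (x : ℚ) :
    ¬ IsSquare ((x ^ 2 + 1) * (x ^ 2 + 2)) := by
  rcases eq_or_ne x 0 with rfl | hx
  · norm_num
  intro hsq
  have hclear : (((x.num ^ 2 + x.den ^ 2) * (x.num ^ 2 + 2 * x.den ^ 2) : ℤ) : ℚ) =
      (x ^ 2 + 1) * (x ^ 2 + 2) * ((x.den : ℚ) ^ 2) ^ 2 := by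
    push_cast
    rw [← Rat.mul_den_eq_num]
    ring
  have hsq' := hsq.mul (IsSquare.sq ((x.den : ℚ) ^ 2))
  rw [← hclear, Rat.isSquare_intCast_iff] at hsq'
  exact Int.not_isSquare_sq_add_sq_mul_sq_add_two_mul_sq (Rat.isCoprime_num_den x)
    (Rat.num_ne_zero.mpr hx) (by positivity) hsq'

theorem Int.quartic_form_ne_zero_of_isCoprime {n d : ℤ} (h : IsCoprime n d) :
    n ^ 4 - 54 * n ^ 2 * d ^ 2 - 117 * n * d ^ 3 - 243 * d ^ 4 ≠ 0 := by
  intro h0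
  have hmod2 : ∀ a b : ZMod 2,
      a ^ 4 - 54 * a ^ 2 * b ^ 2 - 117 * a * b ^ 3 - 243 * b ^ 4 = 0 → a = 0 ∧ b = 0 := by
    decide
  obtain ⟨hn, hd⟩ := hmod2 n d (by exact_mod_cast congrArg (Int.cast : ℤ → ZMod 2) h0)
  rw [ZMod.intCast_zmod_eq_zero_iff_dvd] at hn hd
  have := h.isUnit_of_dvd' hn hd
  norm_num [Int.isUnit_iff] at this

theorem Rat.quartic_ne_zero (t : ℚ) : t ^ 4 - 54 * t ^ 2 - 117 * t - 243 ≠ 0 := by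
  intro h
  apply Int.quartic_form_ne_zero_of_isCoprime (Rat.isCoprime_num_den t)
  have hclear : ((t.num ^ 4 - 54 * t.num ^ 2 * t.den ^ 2 - 117 * t.num * t.den ^ 3
      - 243 * t.den ^ 4 : ℤ) : ℚ) = t.den ^ 4 * (t ^ 4 - 54 * t ^ 2 - 117 * t - 243) := by
    push_cast
    rw [← Rat.mul_den_eq_num]
    ring
  rw [h, mul_zero] at hclear
  exact_mod_cast hclear

theorem statement_9 :
    ¬ ∃ x y z t : ℚ,
      (x ^ 2 + 1) * y ^ 2 = 3 * (t ^ 4 - 54 * t ^ 2 - 117 * t - 243) ∧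
      (x ^ 2 + 2) * z ^ 2 = 3 * (t ^ 4 - 54 * t ^ 2 - 117 * t - 243) := by
  rintro ⟨x, y, z, t, hy, hz⟩
  set N := 3 * (t ^ 4 - 54 * t ^ 2 - 117 * t - 243)
  have hN : N ≠ 0 := mul_ne_zero three_ne_zero (Rat.quartic_ne_zero t)
  have hprod : (x ^ 2 + 1) * (x ^ 2 + 2) * (y * z) ^ 2 = N ^ 2 := by
    linear_combination ((x ^ 2 + 2) * z ^ 2) * hy + N * hz
  have hyz : y * z ≠ 0 := by
    intro h0
    rw [h0] at hprod
    exact hN (pow_eq_zero_iff two_ne_zero |>.mp (by linear_combination -hprod))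
  refine Rat.not_isSquare_sq_add_one_mul_sq_add_two x ⟨N / (y * z), ?_⟩
  rw [div_mul_div_comm, eq_div_iff (mul_self_ne_zero.mpr hyz)]
  linear_combination hprod
end

section
/- The curve 𝒟 : Y² = X² + 1, Z² = X² + 2 has no ℚ-rational affine points, i.e., the simultaneous system Y² = X² + 1, Z² = X² + 2 has no rational solutions (X, Y, Z). -/
private lemma sq2_aux : ∀ k : ℕ, ∀ c d : ℤ, c.natAbs = k → d ≠ 0 → c ^ 2 ≠ 2 * d ^ 2 := by
  intro k
  induction k using Nat.strong_induction_on with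
  | _ k ih =>
  intro c d hk hd heq
  have hc : Even c := by
    rcases Int.even_or_odd c with h | h
    · exact h
    · exfalso
      have h1 : Odd (c ^ 2) := h.pow
      have h2 : Even (c ^ 2) := ⟨d ^ 2, by linarith⟩
      exact (Int.not_odd_iff_even.mpr h2) h1
  obtain ⟨c1, rfl⟩ := hc
  have heq2 : 2 * (d ^ 2) = 2 * (2 * c1 ^ 2) := by linear_combination -heq
  have heq3 : d ^ 2 = 2 * c1 ^ 2 := mul_left_cancel₀ two_ne_zero heq2
  have hc1 : c1 ≠ 0 := by
    rintro rfl
    simp at heq3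
    exact hd heq3
  have hlt : d.natAbs < k := by
    have hc1p : (0:ℤ) < c1 ^ 2 := by positivity
    have h1 : d ^ 2 < (c1 + c1) ^ 2 := by nlinarith [hc1p]
    have h2 : d.natAbs ^ 2 < (c1 + c1).natAbs ^ 2 := by
      zify
      rw [sq_abs, sq_abs]
      exact h1
    have := (Nat.pow_lt_pow_iff_left (two_ne_zero)).mp h2
    omega
  exact ih d.natAbs hlt d c1 rfl hc1 heq3

private lemma helper (X a b : ℤ) (hb : b ≠ 0) (haodd : a % 2 = 1)
    (hgcd : Int.gcd (a ^ 2) (2 * b ^ 2) = 1) (hX : 0 < X)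
    (h : X ^ 2 = a ^ 4 + 4 * b ^ 4) :
    ∃ e f : ℤ, e ^ 4 = f ^ 4 + a ^ 2 ∧ f ≠ 0 ∧ e.natAbs < X.natAbs := by
  have ha2odd : a ^ 2 % 2 = 1 := by
    have : Odd (a ^ 2) := (Int.odd_iff.mpr haodd).pow
    exact Int.odd_iff.mp this
  have ht : PythagoreanTriple (a ^ 2) (2 * b ^ 2) X := by
    have : a ^ 2 * a ^ 2 + (2 * b ^ 2) * (2 * b ^ 2) = X * X := by linear_combination -h
    exact this
  obtain ⟨p, q, hA, hB, hXpq, hpq, hpar, hp0⟩ :=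
    PythagoreanTriple.coprime_classification' ht hgcd ha2odd hX
  have hpqb : p * q = b ^ 2 := by
    have h2 : (2:ℤ) * (p * q) = 2 * (b ^ 2) := by linear_combination -hB
    exact mul_left_cancel₀ two_ne_zero h2
  have hbsq : (0:ℤ) < b ^ 2 := by positivity
  have hpne : p ≠ 0 := by rintro rfl; nlinarith
  have hqne : q ≠ 0 := by rintro rfl; nlinarith
  have hppos : 0 < p := lt_of_le_of_ne hp0 (Ne.symm hpne)
  have hqpos : 0 < q := by
    rcases lt_trichotomy q 0 with h' | h' | h'
    · nlinarith
    · exact absurd h' hqne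
    · exact h'
  have hcop : IsCoprime p q := Int.isCoprime_iff_gcd_eq_one.mpr hpq
  obtain ⟨e, he⟩ := Int.sq_of_isCoprime hcop hpqb
  have hpe : p = e ^ 2 := by
    rcases he with h' | h'
    · exact h'
    · exfalso; nlinarith [sq_nonneg e]
  obtain ⟨f, hf⟩ := Int.sq_of_isCoprime hcop.symm (by linear_combination hpqb : q * p = b ^ 2)
  have hqf : q = f ^ 2 := by
    rcases hf with h' | h'
    · exact h'
    · exfalso; nlinarith [sq_nonneg f]
  have hene : e ≠ 0 := by rintro rfl; simp at hpe; omega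
  have hfne : f ≠ 0 := by rintro rfl; simp at hqf; omega
  refine ⟨e, f, ?_, hfne, ?_⟩
  · linear_combination -hA - (e ^ 2 + p) * hpe + (q + f ^ 2) * hqf
  · have h1 : (1 : ℤ) ≤ (e.natAbs : ℤ) := by
      have := Int.natAbs_pos.mpr hene; exact_mod_cast this
    have h2 : ((e.natAbs : ℤ)) ^ 2 = p := by rw [Int.natAbs_sq]; omega
    have h3 : (e.natAbs : ℤ) < (X.natAbs : ℤ) := by
      have hXeq : (X.natAbs : ℤ) = X := Int.natAbs_of_nonneg (le_of_lt hX)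
      nlinarith [h1, h2, hXeq, hppos, hqpos]
    exact_mod_cast h3


set_option maxHeartbeats 1000000

private lemma descent : ∀ k : ℕ, ∀ x y z : ℤ, x.natAbs = k → y ≠ 0 → z ≠ 0 →
    x ^ 4 ≠ y ^ 4 + z ^ 2 := by
  intro k
  induction k using Nat.strong_induction_on with
  | _ k ih =>
  intro x y z hk hy hz heq
  have hy4 : (0:ℤ) < y ^ 4 := by positivity
  have hz2 : (0:ℤ) < z ^ 2 := by positivity
  have hx : x ≠ 0 := by
    rintro rfl
    simp at heq
    nlinarith
  by_cases hco : Int.gcd x y = 1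
  case neg =>
    -- gcd reduction
    have hg0 : Int.gcd x y ≠ 0 := fun h => hx (Int.gcd_eq_zero_iff.mp h).1
    have hg2 : 2 ≤ Int.gcd x y := by omega
    have hgz : ((Int.gcd x y : ℤ)) ≠ 0 := Int.natCast_ne_zero.mpr hg0
    obtain ⟨x1, hx1⟩ : (Int.gcd x y : ℤ) ∣ x := Int.gcd_dvd_left x y
    obtain ⟨y1, hy1⟩ : (Int.gcd x y : ℤ) ∣ y := Int.gcd_dvd_right x y
    have hke : k = Int.gcd x y * x1.natAbs := by
      have h0 := congrArg Int.natAbs hx1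
      simp only [Int.natAbs_mul, Int.natAbs_natCast] at h0
      omega
    set g : ℤ := (Int.gcd x y : ℤ) with hgdef
    have hdvd : g ^ 2 ∣ z := by
      rw [← Int.pow_dvd_pow_iff (two_ne_zero (α := ℕ))]
      refine ⟨x1 ^ 4 - y1 ^ 4, ?_⟩
      linear_combination -heq + (x^3 + x^2*(g*x1) + x*(g*x1)^2 + (g*x1)^3) * hx1
        - (y^3 + y^2*(g*y1) + y*(g*y1)^2 + (g*y1)^3) * hy1
    obtain ⟨z1, hz1⟩ := hdvd
    have heq1 : x1 ^ 4 = y1 ^ 4 + z1 ^ 2 := by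
      have hmain : g ^ 4 * (x1 ^ 4) = g ^ 4 * (y1 ^ 4 + z1 ^ 2) := by
        linear_combination heq - (x^3 + x^2*(g*x1) + x*(g*x1)^2 + (g*x1)^3) * hx1
          + (y^3 + y^2*(g*y1) + y*(g*y1)^2 + (g*y1)^3) * hy1
          + (z + g^2*z1) * hz1
      exact mul_left_cancel₀ (pow_ne_zero 4 hgz) hmain
    have hx1ne : x1 ≠ 0 := by rintro rfl; simp at hx1; exact hx hx1
    have hy1ne : y1 ≠ 0 := by rintro rfl; simp at hy1; exact hy hy1
    have hz1ne : z1 ≠ 0 := by rintro rfl; simp at hz1; exact hz hz1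
    have hlt : x1.natAbs < k := by
      have h1 : 1 ≤ x1.natAbs := Int.natAbs_pos.mpr hx1ne
      calc x1.natAbs < 2 * x1.natAbs := by omega
        _ ≤ Int.gcd x y * x1.natAbs := Nat.mul_le_mul_right _ hg2
        _ = k := hke.symm
    exact ih x1.natAbs hlt x1 y1 z1 rfl hy1ne hz1ne heq1
  case pos =>
  have hxy : IsCoprime x y := Int.isCoprime_iff_gcd_eq_one.mpr hco
  have hzsq : z ^ 2 = x ^ 4 - y ^ 4 := by linarith
  -- x is odd
  have hxodd : Odd x := by
    rcases Int.even_or_odd x with hxe | h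
    · exfalso
      have hyodd : Odd y := by
        rcases Int.even_or_odd y with hye | h'
        · exfalso
          obtain ⟨u, hu⟩ := hxe
          obtain ⟨v, hv⟩ := hye
          have : IsUnit (2:ℤ) :=
            hxy.isUnit_of_dvd' ⟨u, by omega⟩ ⟨v, by omega⟩
          rw [Int.isUnit_iff] at this
          omega
        · exact h'
      have hzodd : Odd z := by
        have h2 : Odd (z ^ 2) := by
          rw [hzsq, Int.odd_sub]
          exact iff_of_false
            (Int.not_odd_iff_even.mpr (Int.even_pow.mpr ⟨hxe, by norm_num⟩))
            (Int.not_even_iff_odd.mpr hyodd.pow)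
        exact (Int.odd_pow.mp h2).resolve_right (by norm_num)
      obtain ⟨a, rfl⟩ := hxe
      obtain ⟨b, rfl⟩ := hyodd
      obtain ⟨c, rfl⟩ := hzodd
      obtain ⟨u, hu⟩ := Int.even_mul_succ_self c
      have key : (2:ℤ) = 8 * (2*a^4 - 2*b^4 - 4*b^3 - 3*b^2 - b - u) := by
        linear_combination -heq - 4 * hu
      omega
    · exact h
  -- coprimality chain
  have hzy2 : IsCoprime z (y ^ 2) := by
    have hc44 : IsCoprime (x ^ 4) (y ^ 4) := hxy.pow
    have h1 : IsCoprime (z ^ 2 + y ^ 4 * 1) (y ^ 4) := by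
      have he : x ^ 4 = z ^ 2 + y ^ 4 * 1 := by linarith
      rwa [he] at hc44
    have h2 := h1.add_mul_left_left (-1)
    have h3 : IsCoprime (z ^ 2) (y ^ 4) := by
      have he : z ^ 2 + y ^ 4 * 1 + y ^ 4 * (-1) = z ^ 2 := by ring
      rwa [he] at h2
    have h4 : IsCoprime z (y ^ 4) := (IsCoprime.pow_left_iff two_pos).mp h3
    have h5 : IsCoprime z ((y ^ 2) ^ 2) := by
      have he : (y ^ 2) ^ 2 = y ^ 4 := by ring
      rwa [he]
    exact (IsCoprime.pow_right_iff two_pos).mp h5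
  have hx2pos : (0:ℤ) < x ^ 2 := by positivity
  have hy2pos : (0:ℤ) < y ^ 2 := by positivity
  rcases Int.even_or_odd y with hyE | hyO
  · -- y even, z odd : the hard case
    have hzodd : Odd z := by
      have h2 : Odd (z ^ 2) := by
        rw [hzsq, Int.odd_sub]
        exact iff_of_true hxodd.pow (Int.even_pow.mpr ⟨hyE, by norm_num⟩)
      exact (Int.odd_pow.mp h2).resolve_right (by norm_num)
    have ht : PythagoreanTriple z (y ^ 2) (x ^ 2) := by
      have : z * z + y ^ 2 * (y ^ 2) = x ^ 2 * (x ^ 2) := by linear_combination -heq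
      exact this
    obtain ⟨m, n, hzmn, hymn, hxmn, hmn, hpar, hm0⟩ :=
      PythagoreanTriple.coprime_classification' ht
        (Int.isCoprime_iff_gcd_eq_one.mp hzy2) (Int.odd_iff.mp hzodd) hx2pos
    have hmpos : 0 < m := by
      rcases lt_or_eq_of_le hm0 with h' | h'
      · exact h'
      · exfalso
        rw [← h'] at hymn
        simp at hymn
        nlinarith
    have hnpos : 0 < n := by nlinarith [hymn, hy2pos, hmpos]
    have hmnC : IsCoprime m n := Int.isCoprime_iff_gcd_eq_one.mpr hmn
    obtain ⟨y0, hy0⟩ := hyE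
    have hyl : y = 2 * y0 := by omega
    -- abs of x
    set X : ℤ := (x.natAbs : ℤ) with hXdef
    have hXpos : 0 < X := by
      rw [hXdef]
      exact_mod_cast Int.natAbs_pos.mpr hx
    have hXsq : X ^ 2 = x ^ 2 := Int.natAbs_sq x
    have hXnat : X.natAbs = k := by
      rw [hXdef, Int.natAbs_natCast, hk]
    rcases hpar with ⟨hme, hno⟩ | ⟨hmo, hne⟩
    · -- m even, n odd
      obtain ⟨m1, hm1⟩ : Even m := Int.even_iff.mpr hme
      have hml : m = 2 * m1 := by omega
      have hy02 : y0 ^ 2 = m1 * n := by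
        have h4 : (4:ℤ) * (y0 ^ 2) = 4 * (m1 * n) := by
          linear_combination hymn - (y + 2*y0) * hyl + 2 * n * hml
        exact mul_left_cancel₀ (by norm_num) h4
      have hm1n : IsCoprime m1 n := by
        have : IsCoprime (2 * m1) n := by rwa [← hml]
        exact this.of_mul_left_right
      have hm1pos : 0 < m1 := by omega
      obtain ⟨s, hs⟩ := Int.sq_of_isCoprime hm1n hy02.symm
      have hms : m1 = s ^ 2 := by
        rcases hs with h' | h'
        · exact h'
        · exfalso; linarith [sq_nonneg s]
      obtain ⟨t, ht'⟩ := Int.sq_of_isCoprime hm1n.symm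
        (by linear_combination -hy02 : n * m1 = y0 ^ 2)
      have hnt : n = t ^ 2 := by
        rcases ht' with h' | h'
        · exact h'
        · exfalso; linarith [sq_nonneg t]
      have hsne : s ≠ 0 := by rintro rfl; simp at hms; omega
      have htne : t ≠ 0 := by rintro rfl; simp at hnt; omega
      have htodd : t % 2 = 1 := by
        have h2 : Odd (t ^ 2) := by rw [← hnt]; exact Int.odd_iff.mpr hno
        exact Int.odd_iff.mp ((Int.odd_pow.mp h2).resolve_right (by norm_num))
      have hXeq : X ^ 2 = t ^ 4 + 4 * s ^ 4 := by
        rw [hXsq]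
        linear_combination hxmn + (m + 2*s^2) * hml + 2*(m + 2*s^2) * hms + (n + t^2) * hnt
      have hgcd2 : Int.gcd (t ^ 2) (2 * s ^ 2) = 1 := by
        apply Int.isCoprime_iff_gcd_eq_one.mp
        have h5 : IsCoprime n m := hmnC.symm
        rwa [hnt, hml, hms] at h5
      obtain ⟨e, f, heqn, hfne, helt⟩ := helper X t s hsne htodd hgcd2 hXpos hXeq
      rw [hXnat] at helt
      exact ih e.natAbs helt e f t rfl hfne htne heqn
    · -- m odd, n even
      obtain ⟨n1, hn1⟩ : Even n := Int.even_iff.mpr hne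
      have hnl : n = 2 * n1 := by omega
      have hy02 : y0 ^ 2 = m * n1 := by
        have h4 : (4:ℤ) * (y0 ^ 2) = 4 * (m * n1) := by
          linear_combination hymn - (y + 2*y0) * hyl + 2 * m * hnl
        exact mul_left_cancel₀ (by norm_num) h4
      have hmn1 : IsCoprime m n1 := by
        have h6 : IsCoprime n m := hmnC.symm
        have h7 : IsCoprime (2 * n1) m := by rwa [← hnl]
        exact h7.of_mul_left_right.symm
      have hn1pos : 0 < n1 := by omega
      obtain ⟨s, hs⟩ := Int.sq_of_isCoprime hmn1 hy02.symm
      have hms : m = s ^ 2 := by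
        rcases hs with h' | h'
        · exact h'
        · exfalso; linarith [sq_nonneg s]
      obtain ⟨t, ht'⟩ := Int.sq_of_isCoprime hmn1.symm
        (by linear_combination -hy02 : n1 * m = y0 ^ 2)
      have hnt : n1 = t ^ 2 := by
        rcases ht' with h' | h'
        · exact h'
        · exfalso; linarith [sq_nonneg t]
      have hsne : s ≠ 0 := by rintro rfl; simp at hms; omega
      have htne : t ≠ 0 := by rintro rfl; simp at hnt; omega
      have hsodd : s % 2 = 1 := by
        have h2 : Odd (s ^ 2) := by rw [← hms]; exact Int.odd_iff.mpr hmo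
        exact Int.odd_iff.mp ((Int.odd_pow.mp h2).resolve_right (by norm_num))
      have hXeq : X ^ 2 = s ^ 4 + 4 * t ^ 4 := by
        rw [hXsq]
        linear_combination hxmn + (m + s^2) * hms + (n + 2*t^2) * hnl + 2*(n + 2*t^2) * hnt
      have hgcd2 : Int.gcd (s ^ 2) (2 * t ^ 2) = 1 := by
        apply Int.isCoprime_iff_gcd_eq_one.mp
        have h5 : IsCoprime m n := hmnC
        rwa [hms, hnl, hnt] at h5
      obtain ⟨e, f, heqn, hfne, helt⟩ := helper X s t htne hsodd hgcd2 hXpos hXeq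
      rw [hXnat] at helt
      exact ih e.natAbs helt e f s rfl hfne hsne heqn
  · -- y odd : easy case
    have hy2odd : y ^ 2 % 2 = 1 := Int.odd_iff.mp hyO.pow
    have ht : PythagoreanTriple (y ^ 2) z (x ^ 2) := by
      have : y ^ 2 * y ^ 2 + z * z = x ^ 2 * (x ^ 2) := by linear_combination -heq
      exact this
    obtain ⟨m, n, hymn, hzmn, hxmn, hmn, hpar, hm0⟩ :=
      PythagoreanTriple.coprime_classification' ht
        (Int.isCoprime_iff_gcd_eq_one.mp hzy2.symm) hy2odd hx2pos
    have hnne : n ≠ 0 := by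
      rintro rfl
      simp at hzmn
      exact hz hzmn
    have heqn : m ^ 4 = n ^ 4 + (x * y) ^ 2 := by
      linear_combination -(y^2)*hxmn - (m^2+n^2)*hymn
    have hlt : m.natAbs < k := by
      have hn2 : (0:ℤ) < n ^ 2 := lt_of_le_of_ne (sq_nonneg n) (Ne.symm (pow_ne_zero 2 hnne))
      have h2 : m.natAbs ^ 2 < x.natAbs ^ 2 := by
        zify
        rw [sq_abs, sq_abs]
        nlinarith [hxmn]
      have := (Nat.pow_lt_pow_iff_left (two_ne_zero)).mp h2
      omega
    exact ih m.natAbs hlt m n (x * y) rfl hnne (mul_ne_zero hx hy) heqn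

private lemma int_version (a B b c : ℤ) (hB : B ≠ 0)
    (h1 : b ^ 2 = a ^ 2 + B ^ 2) (h2 : c ^ 2 = a ^ 2 + 2 * B ^ 2) : False := by
  by_cases ha : a = 0
  · subst ha
    simp at h2
    exact sq2_aux c.natAbs c B rfl hB (by linarith)
  · have hc : c ≠ 0 := by
      rintro rfl
      have : (0:ℤ) < a ^ 2 + 2 * B ^ 2 := by positivity
      simp at h2
      linarith
    have hkey : b ^ 4 = B ^ 4 + (a * c) ^ 2 := by
      linear_combination (b ^ 2 + B ^ 2 + a ^ 2) * h1 - a ^ 2 * h2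
    exact descent b.natAbs b B (a * c) rfl hB (mul_ne_zero ha hc) hkey

theorem statement_12 :
    ¬ ∃ x y z : ℚ, y ^ 2 = x ^ 2 + 1 ∧ z ^ 2 = x ^ 2 + 2 := by
  rintro ⟨x, y, z, hy, hz⟩
  have hBQ : ((x.den : ℚ)) ≠ 0 := by
    exact_mod_cast x.den_ne_zero
  have hxnum : x * (x.den : ℚ) = (x.num : ℚ) := by
    have h := Rat.num_div_den x
    rw [div_eq_iff hBQ] at h
    linear_combination -h
  -- y * den is an integer
  have hY2 : (y * (x.den : ℚ)) ^ 2 = ((x.num ^ 2 + (x.den : ℤ) ^ 2 : ℤ) : ℚ) := by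
    push_cast
    linear_combination ((x.den : ℚ)) ^ 2 * hy + (x * (x.den : ℚ) + (x.num : ℚ)) * hxnum
  have hZ2 : (z * (x.den : ℚ)) ^ 2 = ((x.num ^ 2 + 2 * (x.den : ℤ) ^ 2 : ℤ) : ℚ) := by
    push_cast
    linear_combination ((x.den : ℚ)) ^ 2 * hz + (x * (x.den : ℚ) + (x.num : ℚ)) * hxnum
  have hYden : (y * (x.den : ℚ)).den = 1 := by
    have h := congrArg Rat.den hY2
    rw [Rat.den_pow, Rat.den_intCast] at h
    simpa using (pow_eq_one_iff (n := 2)).mp h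
  have hZden : (z * (x.den : ℚ)).den = 1 := by
    have h := congrArg Rat.den hZ2
    rw [Rat.den_pow, Rat.den_intCast] at h
    simpa using (pow_eq_one_iff (n := 2)).mp h
  have hYeq : (((y * (x.den : ℚ)).num : ℚ)) = y * (x.den : ℚ) := (Rat.den_eq_one_iff _).mp hYden
  have hZeq : (((z * (x.den : ℚ)).num : ℚ)) = z * (x.den : ℚ) := (Rat.den_eq_one_iff _).mp hZden
  set Y : ℤ := (y * (x.den : ℚ)).num
  set Z : ℤ := (z * (x.den : ℚ)).num
  have hYint : Y ^ 2 = x.num ^ 2 + (x.den : ℤ) ^ 2 := by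
    have : ((Y ^ 2 : ℤ) : ℚ) = ((x.num ^ 2 + (x.den : ℤ) ^ 2 : ℤ) : ℚ) := by
      push_cast
      rw [hYeq]
      exact_mod_cast hY2
    exact_mod_cast this
  have hZint : Z ^ 2 = x.num ^ 2 + 2 * (x.den : ℤ) ^ 2 := by
    have : ((Z ^ 2 : ℤ) : ℚ) = ((x.num ^ 2 + 2 * (x.den : ℤ) ^ 2 : ℤ) : ℚ) := by
      push_cast
      rw [hZeq]
      exact_mod_cast hZ2
    exact_mod_cast this
  exact int_version x.num (x.den : ℤ) Y Z (by exact_mod_cast x.den_ne_zero) hYint hZint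
end
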